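/- Let M = (1/√3) · [[1, (1/√2)e^{iπ/3}], [√2, -2e^{iπ/3}]]. The eigenvalues of M are λ± = -i/2 ± (1/2)√(1 + 2√3 i), and these two eigenvalues have different absolute values. -/

import Mathlib

/-!
The characteristic polynomial of `M` is `λ² + iλ - e^{iπ/3}`, whose discriminant
`i² + 4e^{iπ/3}` is `1 + 2√3 i`; this gives the two eigenvalues. Their moduli are
`|c - i|/2` and `|c + i|/2`, which agree only when `c` is real, impossible since
`c²` is not real.
-/

open Matrix Complex

noncomputable def M : Matrix (Fin 2) (Fin 2) ℂ :=
  ((Real.sqrt 3 : ℂ)⁻¹) •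
    !![1, (Real.sqrt 2 : ℂ)⁻¹ * Complex.exp (Real.pi / 3 * Complex.I);
       (Real.sqrt 2 : ℂ), -2 * Complex.exp (Real.pi / 3 * Complex.I)]

theorem Matrix.det_sub_smul_one_fin_two {R : Type*} [CommRing R]
    (A : Matrix (Fin 2) (Fin 2) R) (t : R) :
    (A - t • 1).det = t ^ 2 - A.trace * t + A.det := by
  simp only [det_fin_two, trace_fin_two, sub_apply, smul_apply, one_apply_eq,
    one_apply_ne (show (0 : Fin 2) ≠ 1 by decide), one_apply_ne (show (1 : Fin 2) ≠ 0 by decide),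
    smul_eq_mul, mul_one, mul_zero, sub_zero]
  ring

theorem Complex.exp_pi_div_three_mul_I :
    exp (Real.pi / 3 * I) = 1 / 2 + (Real.sqrt 3 : ℂ) / 2 * I := by
  rw [show (Real.pi : ℂ) / 3 = ((Real.pi / 3 : ℝ) : ℂ) by push_cast; ring, exp_mul_I,
    ← ofReal_cos, ← ofReal_sin, Real.cos_pi_div_three, Real.sin_pi_div_three]
  push_cast
  ring

theorem Complex.ofReal_sqrt_three_sq : (Real.sqrt 3 : ℂ) ^ 2 = 3 := by
  rw [← ofReal_pow, Real.sq_sqrt (by norm_num)]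
  norm_num

theorem trace_M : M.trace = -I := by
  have h3 : (Real.sqrt 3 : ℂ) ≠ 0 := ofReal_ne_zero.mpr (by positivity)
  rw [M, trace_smul, trace_fin_two_of, exp_pi_div_three_mul_I, smul_eq_mul]
  field_simp
  ring

theorem det_M : M.det = -exp (Real.pi / 3 * I) := by
  have h3 : (Real.sqrt 3 : ℂ) ≠ 0 := ofReal_ne_zero.mpr (by positivity)
  rw [M, det_smul, det_fin_two_of, Fintype.card_fin]
  field_simp
  linear_combination ofReal_sqrt_three_sq

theorem det_M_sub_smul_one (t : ℂ) :
    (M - t • 1).det = ((2 * t + I) ^ 2 - (1 + 2 * (Real.sqrt 3 : ℂ) * I)) / 4 := by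
  rw [det_sub_smul_one_fin_two, trace_M, det_M, exp_pi_div_three_mul_I]
  linear_combination -I_sq / 4

theorem Complex.im_ne_zero_of_im_sq_ne_zero {z : ℂ} (h : (z ^ 2).im ≠ 0) : z.im ≠ 0 :=
  fun h0 => h (by simp [sq, h0])

theorem Complex.norm_sub_I_ne_norm_add_I {z : ℂ} (hz : z.im ≠ 0) : ‖z - I‖ ≠ ‖z + I‖ := by
  intro h
  have hsq := congrArg (· ^ 2) h
  simp only [Complex.sq_norm, normSq_apply, sub_re, sub_im, add_re, add_im, I_re, I_im] at hsq
  exact hz (by linarith)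

theorem stmt1 (c : ℂ) (hc : c ^ 2 = 1 + 2 * (Real.sqrt 3 : ℂ) * Complex.I) :
    (Matrix.det (M - (-Complex.I / 2 + c / 2) • (1 : Matrix (Fin 2) (Fin 2) ℂ)) = 0) ∧
    (Matrix.det (M - (-Complex.I / 2 - c / 2) • (1 : Matrix (Fin 2) (Fin 2) ℂ)) = 0) ∧
    ‖-Complex.I / 2 + c / 2‖ ≠ ‖-Complex.I / 2 - c / 2‖ := by
  refine ⟨by rw [det_M_sub_smul_one, ← hc]; ring, by rw [det_M_sub_smul_one, ← hc]; ring, ?_⟩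
  have hc_im : c.im ≠ 0 := im_ne_zero_of_im_sq_ne_zero (by simp [hc])
  rw [show -I / 2 + c / 2 = (c - I) / 2 by ring, show -I / 2 - c / 2 = -((c + I) / 2) by ring,
    norm_neg, norm_div, norm_div]
  exact fun h => norm_sub_I_ne_norm_add_I hc_im ((div_left_inj' (by norm_num)).mp h)
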